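/- Let M be a free abelian group of finite rank, V and W subgroups of M, and φ : V → W a group isomorphism. Define a descending chain of subgroups of M by V_{(0)} = V and V_{(i+1)} = φ(V_{(i)}) ∩ V_{(i)} (each V_{(i)} is contained in V, so φ(V_{(i)}) is defined). Then the ℚ-subspaces V_{(i)}⊗ℚ of M⊗ℚ form a weakly decreasing chain; there exists i ≤ rank(M) with V_{(i)}⊗ℚ = V_{(i+1)}⊗ℚ; and for the first such i one has V_{(j)}⊗ℚ = V_{(i)}⊗ℚ for all j ≥ i and D_φ = V_{(i)}⊗ℚ. -/

import Mathlib

/-!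
Setting: `M = ℤ^n` is a free abelian group of finite rank, `V, W` are subgroups of `M`,
and `φ : V ≃+ W` is a group isomorphism.  Inside `M ⊗ ℚ = ℚ^n`, a subgroup `U` of `M`
is identified with the `ℚ`-subspace `U ⊗ ℚ` spanned by its image, and `φ_ℚ` denotes the
unique `ℚ`-linear extension of `φ` to `V ⊗ ℚ`.
-/

/-- The canonical embedding of `ℤ^n` into `ℚ^n` (i.e. `M → M ⊗ ℚ`). -/
def embQ (n : ℕ) (x : Fin n → ℤ) : Fin n → ℚ := fun i => (x i : ℚ)

/-- `U ⊗ ℚ`, the `ℚ`-subspace of `ℚ^n` spanned by the image of a subgroup `U` of `ℤ^n`. -/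
def qSpan (n : ℕ) (U : AddSubgroup (Fin n → ℤ)) : Submodule ℚ (Fin n → ℚ) :=
  Submodule.span ℚ (embQ n '' (U : Set (Fin n → ℤ)))

/-- `RelQ V W φ x y` expresses that `x ∈ V ⊗ ℚ` and `φ_ℚ (x) = y`, where `φ_ℚ` is the
unique `ℚ`-linear extension of `φ : V ≃+ W`: there is a nonzero integer `p` clearing the
denominators of `x`, with `p • x ∈ V` and `φ (p • x) = p • y`. -/
def RelQ {n : ℕ} (V W : AddSubgroup (Fin n → ℤ)) (φ : V ≃+ W)
    (x y : Fin n → ℚ) : Prop :=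
  ∃ p : ℤ, p ≠ 0 ∧ ∃ v : V, embQ n (v : Fin n → ℤ) = p • x ∧
    embQ n ((φ v : W) : Fin n → ℤ) = p • y

/-- `D_φ`: the set of `x ∈ (V ∩ W) ⊗ ℚ` admitting a full backward orbit
`(x_k)_{k ≥ 0}` under `φ_ℚ` inside `(V ∩ W) ⊗ ℚ`, i.e. `x_0 = x` and
`φ_ℚ (x_{k+1}) = x_k` for all `k`. -/
def DSet {n : ℕ} (V W : AddSubgroup (Fin n → ℤ)) (φ : V ≃+ W) : Set (Fin n → ℚ) :=
  {x | ∃ xs : ℕ → (Fin n → ℚ), xs 0 = x ∧ (∀ k, xs k ∈ qSpan n (V ⊓ W)) ∧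
      ∀ k, RelQ V W φ (xs (k + 1)) (xs k)}


/-- The image `φ (S)` (for `S ≤ V`) as a subgroup of `M`; in general this is `φ (S ∩ V)`. -/
def imUnder {n : ℕ} (V W : AddSubgroup (Fin n → ℤ)) (φ : V ≃+ W)
    (S : AddSubgroup (Fin n → ℤ)) : AddSubgroup (Fin n → ℤ) :=
  AddSubgroup.map (W.subtype.comp φ.toAddMonoidHom) ((S ⊓ V).addSubgroupOf V)

/-- The descending chain `V_{(0)} = V`, `V_{(i+1)} = φ (V_{(i)}) ∩ V_{(i)}`. -/
def chainV {n : ℕ} (V W : AddSubgroup (Fin n → ℤ)) (φ : V ≃+ W) :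
    ℕ → AddSubgroup (Fin n → ℤ)
  | 0 => V
  | (i + 1) => imUnder V W φ (chainV V W φ i) ⊓ chainV V W φ i

/-!
Clearing denominators shows that `φ(S) ⊗ ℚ = φ_ℚ(S ⊗ ℚ)` for `S ≤ V`, so the rational chain
obeys the recursion `Q_{i+1} = Q_i ∩ φ_ℚ(Q_i)`, in which each term determines the next. Hence
the chain is constant as soon as two consecutive terms agree, and since a strictly decreasing
chain of subspaces of `ℚ^n` has at most `n` steps this happens by step `n`. A backward orbit
lies in every `Q_i` by induction on `i`. Conversely, on a stable term `Q` every point has a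
`φ_ℚ`-preimage in `Q`, and iterating a choice of preimages produces a backward orbit.
-/

section BackwardOrbit

variable {α : Type*} (r : α → α → Prop)

def interImage (A : Set α) : Set α := {y ∈ A | ∃ x ∈ A, r x y}

def backwardOrbitSet (S : Set α) : Set α :=
  {x | ∃ xs : ℕ → α, xs 0 = x ∧ (∀ k, xs k ∈ S) ∧ ∀ k, r (xs (k + 1)) (xs k)}

variable {r}

theorem backwardOrbitSet_mono {S T : Set α} (h : S ⊆ T) :
    backwardOrbitSet r S ⊆ backwardOrbitSet r T :=
  fun _ ⟨xs, hx, hxsS, hxs⟩ => ⟨xs, hx, fun k => h (hxsS k), hxs⟩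

theorem subset_backwardOrbitSet {A : Set α} (h : ∀ y ∈ A, ∃ x ∈ A, r x y) :
    A ⊆ backwardOrbitSet r A := by
  choose! f hfA hfr using h
  intro y hy
  have hiter (k : ℕ) : f^[k] y ∈ A := Set.MapsTo.iterate hfA k hy
  refine ⟨fun k => f^[k] y, rfl, hiter, fun k => ?_⟩
  show r (f^[k + 1] y) (f^[k] y)
  rw [Function.iterate_succ_apply']
  exact hfr _ (hiter k)

variable {Q : ℕ → Set α}

theorem antitone_of_eq_interImage (hQ : ∀ i, Q (i + 1) = interImage r (Q i)) :
    Antitone Q :=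
  antitone_nat_of_succ_le fun i => by rw [hQ]; exact fun _ hy => hy.1

theorem eq_of_le_of_succ_eq (hQ : ∀ i, Q (i + 1) = interImage r (Q i))
    {i : ℕ} (h : Q (i + 1) = Q i) {j : ℕ} (hij : i ≤ j) : Q j = Q i := by
  induction j, hij using Nat.le_induction with
  | base => rfl
  | succ j _ ih => rw [hQ, ih, ← hQ, h]

theorem backwardOrbitSet_subset (hQ : ∀ i, Q (i + 1) = interImage r (Q i))
    {S : Set α} (hS : S ⊆ Q 0) (i : ℕ) : backwardOrbitSet r S ⊆ Q i := by
  rintro x ⟨xs, rfl, hxsS, hxs⟩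
  suffices ∀ i k, xs k ∈ Q i from this i 0
  intro i
  induction i with
  | zero => exact fun k => hS (hxsS k)
  | succ i ih => exact fun k => by rw [hQ]; exact ⟨ih k, xs (k + 1), ih (k + 1), hxs k⟩

theorem backwardOrbitSet_eq_of_succ_eq (hQ : ∀ i, Q (i + 1) = interImage r (Q i))
    {i : ℕ} (h : Q (i + 1) = Q i) :
    backwardOrbitSet r (Q 1) = Q i := by
  have hanti := antitone_of_eq_interImage hQ
  refine (backwardOrbitSet_subset hQ (hanti zero_le_one) i).antisymm ?_
  have hpre : ∀ y ∈ Q i, ∃ x ∈ Q i, r x y := by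
    intro y hy
    rw [← h, hQ] at hy
    exact hy.2
  calc Q i ⊆ backwardOrbitSet r (Q i) := subset_backwardOrbitSet hpre
    _ ⊆ backwardOrbitSet r (Q 1) := backwardOrbitSet_mono (h ▸ hanti (Nat.le_add_left 1 i))

end BackwardOrbit

theorem Submodule.exists_le_finrank_eq_succ {K E : Type*} [DivisionRing K] [AddCommGroup E]
    [Module K E] [FiniteDimensional K E] {Q : ℕ → Submodule K E} (hQ : Antitone Q) :
    ∃ i ≤ Module.finrank K E, Q i = Q (i + 1) := by
  by_contra! hne
  have hdrop : ∀ i ≤ Module.finrank K E + 1, Module.finrank K (Q i) + i ≤ Module.finrank K E := by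
    intro i
    induction i with
    | zero => exact fun _ => Submodule.finrank_le (Q 0)
    | succ i ih =>
      intro hi
      have hlt : Q (i + 1) < Q i := lt_of_le_of_ne (hQ i.le_succ) (hne i (by omega)).symm
      have := Submodule.finrank_lt_finrank_of_lt hlt
      have := ih (by omega)
      omega
  have := hdrop _ le_rfl
  omega

section RatSpan

variable {E : Type*} [AddCommGroup E] [Module ℚ E]

theorem AddSubgroup.mem_span_rat_iff {A : AddSubgroup E} {y : E} :
    y ∈ Submodule.span ℚ (A : Set E) ↔ ∃ p : ℤ, p ≠ 0 ∧ p • y ∈ A := by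
  constructor
  · intro hy
    induction hy using Submodule.span_induction with
    | mem x hx => exact ⟨1, one_ne_zero, by rwa [one_smul]⟩
    | zero => exact ⟨1, one_ne_zero, by rw [smul_zero]; exact A.zero_mem⟩
    | add x y _ _ hx hy =>
      obtain ⟨p, hp, hpx⟩ := hx
      obtain ⟨q, hq, hqy⟩ := hy
      refine ⟨p * q, mul_ne_zero hp hq, ?_⟩
      rw [smul_add, mul_comm, mul_smul, mul_comm, mul_smul]
      exact A.add_mem (A.zsmul_mem hpx q) (A.zsmul_mem hqy p)
    | smul c x _ hx =>
      obtain ⟨p, hp, hpx⟩ := hx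
      refine ⟨p * c.den, mul_ne_zero hp (by exact_mod_cast c.den_ne_zero), ?_⟩
      have hscalar : (p * c.den : ℤ) • (c • x) = c.num • (p • x) := by
        rw [← Int.cast_smul_eq_zsmul ℚ, ← Int.cast_smul_eq_zsmul ℚ, ← Int.cast_smul_eq_zsmul ℚ,
          smul_smul, smul_smul, ← Rat.mul_den_eq_num]
        push_cast
        ring_nf
      rw [hscalar]
      exact A.zsmul_mem hpx _
  · rintro ⟨p, hp, hpy⟩
    have hpQ : (p : ℚ) ≠ 0 := by exact_mod_cast hp
    have := Submodule.smul_mem _ (p : ℚ)⁻¹ (Submodule.subset_span (R := ℚ) hpy)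
    rwa [← Int.cast_smul_eq_zsmul ℚ, smul_smul, inv_mul_cancel₀ hpQ, one_smul] at this

theorem AddSubgroup.span_rat_inf (A B : AddSubgroup E) :
    Submodule.span ℚ ((A ⊓ B : AddSubgroup E) : Set E) =
      Submodule.span ℚ (A : Set E) ⊓ Submodule.span ℚ (B : Set E) := by
  refine le_antisymm
    (le_inf (Submodule.span_mono inf_le_left) (Submodule.span_mono inf_le_right)) ?_
  rintro y ⟨hyA, hyB⟩
  obtain ⟨p, hp, hpy⟩ := mem_span_rat_iff.mp hyA
  obtain ⟨q, hq, hqy⟩ := mem_span_rat_iff.mp hyB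
  refine mem_span_rat_iff.mpr ⟨q * p, mul_ne_zero hq hp, ?_, ?_⟩
  · rw [mul_smul]; exact A.zsmul_mem hpy q
  · rw [mul_comm, mul_smul]; exact B.zsmul_mem hqy p

end RatSpan

section QSpan

variable {n : ℕ}

def embQAddHom (n : ℕ) : (Fin n → ℤ) →+ (Fin n → ℚ) := (Int.castAddHom ℚ).compLeft (Fin n)

@[simp]
theorem coe_embQAddHom : ⇑(embQAddHom n) = embQ n := rfl

theorem embQ_zsmul (m : ℤ) (a : Fin n → ℤ) : embQ n (m • a) = m • embQ n a :=
  map_zsmul (embQAddHom n) m a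

theorem embQ_injective : Function.Injective (embQ n) :=
  fun _ _ h => funext fun i => Int.cast_injective (congrFun h i)

theorem qSpan_eq_span_map (U : AddSubgroup (Fin n → ℤ)) :
    qSpan n U = Submodule.span ℚ (U.map (embQAddHom n) : Set (Fin n → ℚ)) := by
  rw [AddSubgroup.coe_map, coe_embQAddHom]; rfl

theorem mem_qSpan_iff {U : AddSubgroup (Fin n → ℤ)} {x : Fin n → ℚ} :
    x ∈ qSpan n U ↔ ∃ p : ℤ, p ≠ 0 ∧ ∃ u ∈ U, embQ n u = p • x := by
  simp only [qSpan_eq_span_map, AddSubgroup.mem_span_rat_iff, AddSubgroup.mem_map,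
    coe_embQAddHom]

theorem qSpan_mono {A B : AddSubgroup (Fin n → ℤ)} (h : A ≤ B) : qSpan n A ≤ qSpan n B :=
  Submodule.span_mono (Set.image_mono h)

theorem qSpan_inf (A B : AddSubgroup (Fin n → ℤ)) :
    qSpan n (A ⊓ B) = qSpan n A ⊓ qSpan n B := by
  simp only [qSpan_eq_span_map, AddSubgroup.map_inf_eq _ _ (embQAddHom n) embQ_injective,
    AddSubgroup.span_rat_inf]

variable {V W : AddSubgroup (Fin n → ℤ)} {φ : V ≃+ W}

theorem mem_imUnder {S : AddSubgroup (Fin n → ℤ)} {y : Fin n → ℤ} :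
    y ∈ imUnder V W φ S ↔ ∃ v : V, (v : Fin n → ℤ) ∈ S ∧ (φ v : Fin n → ℤ) = y := by
  simp only [imUnder, AddSubgroup.mem_map, AddSubgroup.mem_addSubgroupOf, AddSubgroup.mem_inf,
    AddMonoidHom.coe_comp, Function.comp_apply, AddSubgroup.coe_subtype,
    AddEquiv.coe_toAddMonoidHom]
  exact ⟨fun ⟨v, ⟨hvS, _⟩, hv⟩ => ⟨v, hvS, hv⟩, fun ⟨v, hvS, hv⟩ => ⟨v, ⟨hvS, v.2⟩, hv⟩⟩

theorem imUnder_self : imUnder V W φ V = W := by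
  ext y
  rw [mem_imUnder]
  refine ⟨fun ⟨v, _, hv⟩ => hv ▸ (φ v).2, fun hy => ⟨φ.symm ⟨y, hy⟩, (φ.symm ⟨y, hy⟩).2, ?_⟩⟩
  simp

theorem mem_qSpan_imUnder_iff {S : AddSubgroup (Fin n → ℤ)} (hS : S ≤ V) {y : Fin n → ℚ} :
    y ∈ qSpan n (imUnder V W φ S) ↔ ∃ x ∈ qSpan n S, RelQ V W φ x y := by
  constructor
  · intro hy
    obtain ⟨p, hp, _, hw, hpy⟩ := mem_qSpan_iff.mp hy
    obtain ⟨v, hvS, rfl⟩ := mem_imUnder.mp hw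
    have hpQ : (p : ℚ) ≠ 0 := by exact_mod_cast hp
    have hv : embQ n v = p • ((p : ℚ)⁻¹ • embQ n v) := by
      rw [← Int.cast_smul_eq_zsmul ℚ, smul_smul, mul_inv_cancel₀ hpQ, one_smul]
    exact ⟨_, mem_qSpan_iff.mpr ⟨p, hp, v, hvS, hv⟩, p, hp, v, hv, hpy⟩
  · rintro ⟨x, hx, p, hp, v, hvx, hvy⟩
    obtain ⟨q, hq, s, hsS, hsx⟩ := mem_qSpan_iff.mp hx
    -- `q • v` and `p • s` both clear the denominators of `(p * q) • x`, so they coincide in `V`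
    have hvs : q • v = p • (⟨s, hS hsS⟩ : V) := by
      refine Subtype.ext (embQ_injective ?_)
      rw [AddSubgroup.coe_zsmul, AddSubgroup.coe_zsmul, embQ_zsmul, embQ_zsmul, hvx, hsx,
        smul_smul, smul_smul, mul_comm]
    have hφ : embQ n (p • (φ ⟨s, hS hsS⟩ : Fin n → ℤ)) = (q * p) • y := by
      rw [← AddSubgroup.coe_zsmul, ← map_zsmul, ← hvs, map_zsmul, AddSubgroup.coe_zsmul,
        embQ_zsmul, hvy, smul_smul]
    refine mem_qSpan_iff.mpr ⟨q * p, mul_ne_zero hq hp, _, ?_, hφ⟩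
    exact (imUnder V W φ S).zsmul_mem (mem_imUnder.mpr ⟨_, hsS, rfl⟩) p

end QSpan

section Chain

variable {n : ℕ} {V W : AddSubgroup (Fin n → ℤ)} {φ : V ≃+ W}

theorem chainV_succ_le (i : ℕ) : chainV V W φ (i + 1) ≤ chainV V W φ i := inf_le_right

theorem chainV_antitone : Antitone (chainV V W φ) := antitone_nat_of_succ_le chainV_succ_le

theorem chainV_le : ∀ i, chainV V W φ i ≤ V
  | 0 => le_rfl
  | i + 1 => (chainV_succ_le i).trans (chainV_le i)

theorem chainV_one : chainV V W φ 1 = V ⊓ W := by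
  show imUnder V W φ V ⊓ V = V ⊓ W
  rw [imUnder_self, inf_comm]

theorem coe_qSpan_chainV_succ (i : ℕ) :
    (qSpan n (chainV V W φ (i + 1)) : Set (Fin n → ℚ)) =
      interImage (RelQ V W φ) (qSpan n (chainV V W φ i)) := by
  ext y
  show y ∈ qSpan n (imUnder V W φ (chainV V W φ i) ⊓ chainV V W φ i) ↔ _
  rw [qSpan_inf, Submodule.mem_inf, mem_qSpan_imUnder_iff (chainV_le i), and_comm]
  rfl

end Chain

/-- Lemma 7.2(3) (construction of `D_φ`): the subspaces `V_{(i)} ⊗ ℚ` form a weakly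
decreasing chain; it stabilizes at some `i ≤ n = rank M`; and for the first such `i`,
`V_{(j)} ⊗ ℚ = V_{(i)} ⊗ ℚ` for all `j ≥ i` and `D_φ = V_{(i)} ⊗ ℚ`. -/
theorem statement7 (n : ℕ) (V W : AddSubgroup (Fin n → ℤ)) (φ : V ≃+ W) :
    (∀ i, qSpan n (chainV V W φ (i + 1)) ≤ qSpan n (chainV V W φ i)) ∧
    (∃ i, i ≤ n ∧ qSpan n (chainV V W φ i) = qSpan n (chainV V W φ (i + 1))) ∧
    ∀ i, qSpan n (chainV V W φ i) = qSpan n (chainV V W φ (i + 1)) →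
      (∀ j, j < i → qSpan n (chainV V W φ j) ≠ qSpan n (chainV V W φ (j + 1))) →
      (∀ j, i ≤ j → qSpan n (chainV V W φ j) = qSpan n (chainV V W φ i)) ∧
        DSet V W φ = (qSpan n (chainV V W φ i) : Set (Fin n → ℚ)) := by
  let Q : ℕ → Set (Fin n → ℚ) := fun k => qSpan n (chainV V W φ k)
  have hQ : ∀ k, Q (k + 1) = interImage (RelQ V W φ) (Q k) := coe_qSpan_chainV_succ
  refine ⟨fun i => qSpan_mono (chainV_succ_le i), ?_, fun i hi _ => ?_⟩
  · simpa only [Module.finrank_fin_fun] using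
      Submodule.exists_le_finrank_eq_succ fun i j hij => qSpan_mono (chainV_antitone hij)
  have hi' : Q (i + 1) = Q i := congrArg SetLike.coe hi.symm
  have hD : DSet V W φ = backwardOrbitSet (RelQ V W φ) (Q 1) := by
    show _ = backwardOrbitSet _ (qSpan n (chainV V W φ 1) : Set (Fin n → ℚ))
    rw [chainV_one]
    rfl
  exact ⟨fun j hij => SetLike.coe_injective (eq_of_le_of_succ_eq hQ hi' hij),
    hD.trans (backwardOrbitSet_eq_of_succ_eq hQ hi')⟩
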